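/- arXiv:2304.05317 — 3 statements merged into one kernel-verified Lean document; each statement's English description precedes it below -/
import Mathlib

section
/- Let A be a commutative ring, d ≥ 1, and let φ : A((u)) → A((u)) be a ring endomorphism for which there exist a real number λ > 1 and an integer N ≥ 0 with φ(u^k·A[[u]]) ⊆ u^{⌊λk⌋}·A[[u]] for all integers k > N. Let m ≥ 0 and let n be an integer with n > N and (λ−1)·n > 2m+1. Then for every g ∈ U_n and every x ∈ V_m there exists a unique h ∈ U_n such that g^{-1}·x·φ(g) = h^{-1}·x, where φ is applied to matrices entrywise. -/
noncomputable section

/-- The element `u` of the Laurent series ring `A((u))`. -/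
def uvar (A : Type*) [CommRing A] : LaurentSeries A :=
  HahnSeries.single (1 : ℤ) (1 : A)

/-- `g ∈ U_n`: the matrix `g` satisfies `g − 1 ∈ uⁿ·M_d(A[[u]])`. -/
def MemUn {A : Type*} [CommRing A] {d : ℕ} (n : ℕ)
    (g : Matrix (Fin d) (Fin d) (LaurentSeries A)) : Prop :=
  ∀ i j, ∃ c : PowerSeries A, (g - 1) i j = uvar A ^ n * HahnSeries.ofPowerSeries ℤ A c

/-- `x ∈ V_m`: the matrix `x` is invertible and all entries of `x` and of `x⁻¹` lie in
`u^{-m}·A[[u]]`. -/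
def MemVm {A : Type*} [CommRing A] {d : ℕ} (m : ℕ)
    (x : Matrix (Fin d) (Fin d) (LaurentSeries A)) : Prop :=
  IsUnit x ∧
    (∀ i j, ∃ c : PowerSeries A, uvar A ^ m * x i j = HahnSeries.ofPowerSeries ℤ A c) ∧
    (∀ i j, ∃ c : PowerSeries A, uvar A ^ m * x⁻¹ i j = HahnSeries.ofPowerSeries ℤ A c)

/-!
Write `Δ = φ(g) - 1`. Contraction puts `Δ` in `u^⌊λn⌋·M_d(A[[u]]) ⊆ u^(n+2m)·M_d(A[[u]])`, so
conjugation by `x ∈ V_m` still leaves `xΔx⁻¹ ∈ uⁿ·M_d(A[[u]])`. Hence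
`w = g⁻¹·x·φ(g)·x⁻¹ = g⁻¹ + g⁻¹·xΔx⁻¹` lies in `U_n` and `h = w⁻¹` is a solution; it is the only
one because `x` is invertible. Inverses stay in `U_n` since `det(1 + uⁿC)` has constant term `1`,
hence is a unit of `A[[u]]`.
-/

theorem Matrix.map_nonsing_inv {R S : Type*} [CommRing R] [CommRing S] {n : Type*} [Fintype n]
    [DecidableEq n] (f : R →+* S) {M : Matrix n n R} (hM : IsUnit M.det) :
    (M.map f)⁻¹ = M⁻¹.map f :=
  Matrix.inv_eq_right_inv <| by
    rw [← Matrix.map_mul, M.mul_nonsing_inv hM, Matrix.map_one _ (map_zero f) (map_one f)]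

theorem PowerSeries.isUnit_det_one_add_X_pow_smul {R : Type*} [CommRing R] {n : Type*}
    [Fintype n] [DecidableEq n] {k : ℕ} (hk : k ≠ 0) (C : Matrix n n (PowerSeries R)) :
    IsUnit (1 + (X : PowerSeries R) ^ k • C).det := by
  have hconst : (1 + (X : PowerSeries R) ^ k • C).map constantCoeff = 1 := by
    ext i j
    simp [Matrix.one_apply, hk, apply_ite constantCoeff]
  rw [isUnit_iff_constantCoeff, RingHom.map_det, RingHom.mapMatrix_apply, hconst, Matrix.det_one]
  exact isUnit_one

section

variable {A : Type*} [CommRing A] {d : ℕ}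

local notation "ι" => HahnSeries.ofPowerSeries ℤ A

theorem ofPowerSeries_X_pow_eq_uvar_pow (k : ℕ) :
    ι (PowerSeries.X ^ k) = uvar A ^ k := by
  rw [map_pow, HahnSeries.ofPowerSeries_X, uvar]

theorem isUnit_uvar : IsUnit (uvar A) :=
  IsUnit.of_mul_eq_one (HahnSeries.single (-1 : ℤ) (1 : A)) <| by
    rw [uvar, HahnSeries.single_mul_single]
    norm_num [HahnSeries.single_zero_one]

/-- `M ∈ uᵏ·M_d(A[[u]])`. -/
def UPowDvd (k : ℕ) (M : Matrix (Fin d) (Fin d) (LaurentSeries A)) : Prop :=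
  ∃ C : Matrix (Fin d) (Fin d) (PowerSeries A), M = uvar A ^ k • C.map ι

theorem uPowDvd_iff_forall {k : ℕ} {M : Matrix (Fin d) (Fin d) (LaurentSeries A)} :
    UPowDvd k M ↔ ∀ i j, ∃ c : PowerSeries A, M i j = uvar A ^ k * ι c := by
  constructor
  · rintro ⟨C, rfl⟩ i j
    exact ⟨C i j, rfl⟩
  · intro h
    choose C hC using h
    exact ⟨Matrix.of C, by ext i j; simp [hC]⟩

theorem memUn_iff_uPowDvd {n : ℕ} {g : Matrix (Fin d) (Fin d) (LaurentSeries A)} :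
    MemUn n g ↔ UPowDvd n (g - 1) :=
  uPowDvd_iff_forall.symm

theorem uPowDvd_zero_uvar_pow_smul_of_forall {m : ℕ}
    {x : Matrix (Fin d) (Fin d) (LaurentSeries A)}
    (hx : ∀ i j, ∃ c : PowerSeries A, uvar A ^ m * x i j = ι c) :
    UPowDvd 0 (uvar A ^ m • x) :=
  uPowDvd_iff_forall.mpr fun i j => by simpa using hx i j

namespace UPowDvd

variable {j k n : ℕ} {M M' w : Matrix (Fin d) (Fin d) (LaurentSeries A)}

theorem one : UPowDvd (A := A) (d := d) 0 1 :=
  ⟨1, by rw [pow_zero, one_smul, Matrix.map_one _ (map_zero _) (map_one _)]⟩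

theorem add (hM : UPowDvd k M) (hM' : UPowDvd k M') : UPowDvd k (M + M') := by
  obtain ⟨C, rfl⟩ := hM
  obtain ⟨C', rfl⟩ := hM'
  exact ⟨C + C', by rw [Matrix.map_add _ (map_add _), smul_add]⟩

theorem neg (hM : UPowDvd k M) : UPowDvd k (-M) := by
  obtain ⟨C, rfl⟩ := hM
  exact ⟨-C, by rw [Matrix.map_neg _ (map_neg _), smul_neg]⟩

theorem mul (hM : UPowDvd j M) (hM' : UPowDvd k M') : UPowDvd (j + k) (M * M') := by
  obtain ⟨C, rfl⟩ := hM
  obtain ⟨C', rfl⟩ := hM'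
  exact ⟨C * C', by rw [Matrix.map_mul, smul_mul_smul, pow_add]⟩

theorem mono (hjk : j ≤ k) (hM : UPowDvd k M) : UPowDvd j M := by
  obtain ⟨C, rfl⟩ := hM
  refine ⟨(PowerSeries.X : PowerSeries A) ^ (k - j) • C, ?_⟩
  rw [Matrix.map_smul' _ _ _ (map_mul _), ofPowerSeries_X_pow_eq_uvar_pow, smul_smul,
    ← pow_add, Nat.add_sub_cancel' hjk]

theorem of_uvar_pow_smul (h : UPowDvd (j + k) (uvar A ^ j • M)) : UPowDvd k M := by
  obtain ⟨C, hC⟩ := h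
  refine ⟨C, ?_⟩
  rw [pow_add, mul_smul] at hC
  exact (isUnit_uvar.pow j).smul_left_cancel.mp hC

theorem zero_of_sub_one (h : UPowDvd k (M - 1)) : UPowDvd 0 M := by
  simpa using one.add (h.mono k.zero_le)

theorem map_of_forall {φ : LaurentSeries A →+* LaurentSeries A} {l : ℕ}
    (hφ : ∀ f : PowerSeries A, ∃ g : PowerSeries A,
      φ (uvar A ^ k * ι f) = uvar A ^ l * ι g)
    (hM : UPowDvd k M) : UPowDvd l (M.map φ) := by
  obtain ⟨C, rfl⟩ := hM
  choose D hD using fun i j => hφ (C i j)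
  exact ⟨Matrix.of D, by ext i j; simp [hD]⟩

theorem exists_eq_map_of_sub_one (hn : n ≠ 0) (h : UPowDvd n (w - 1)) :
    ∃ W : Matrix (Fin d) (Fin d) (PowerSeries A), IsUnit W.det ∧ w = W.map ι := by
  obtain ⟨C, hC⟩ := h
  refine ⟨1 + PowerSeries.X ^ n • C, PowerSeries.isUnit_det_one_add_X_pow_smul hn C, ?_⟩
  rw [Matrix.map_add _ (map_add _), Matrix.map_one _ (map_zero _) (map_one _),
    Matrix.map_smul' _ _ _ (map_mul _), ofPowerSeries_X_pow_eq_uvar_pow, ← hC, add_sub_cancel]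

theorem isUnit_det_of_sub_one (hn : n ≠ 0) (h : UPowDvd n (w - 1)) : IsUnit w.det := by
  obtain ⟨W, hW, rfl⟩ := exists_eq_map_of_sub_one hn h
  rw [← RingHom.mapMatrix_apply, ← RingHom.map_det]
  exact hW.map ι

theorem inv_sub_one (hn : n ≠ 0) (h : UPowDvd n (w - 1)) : UPowDvd n (w⁻¹ - 1) := by
  have hinv : UPowDvd 0 w⁻¹ := by
    obtain ⟨W, hW, rfl⟩ := exists_eq_map_of_sub_one hn h
    exact ⟨W⁻¹, by rw [Matrix.map_nonsing_inv _ hW, pow_zero, one_smul]⟩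
  have : w⁻¹ - 1 = -(w⁻¹ * (w - 1)) := by
    rw [mul_sub, w.nonsing_inv_mul (isUnit_det_of_sub_one hn h), mul_one, neg_sub]
  simpa [this] using (hinv.mul h).neg

theorem conj_of_memVm {m : ℕ} {x : Matrix (Fin d) (Fin d) (LaurentSeries A)} (hx : MemVm m x)
    (hM : UPowDvd (k + 2 * m) M) : UPowDvd k (x * M * x⁻¹) := by
  have h := ((uPowDvd_zero_uvar_pow_smul_of_forall hx.2.1).mul hM).mul
    (uPowDvd_zero_uvar_pow_smul_of_forall hx.2.2)
  rw [Matrix.smul_mul, Matrix.mul_smul, Matrix.smul_mul, smul_smul, ← pow_add,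
    show 0 + (k + 2 * m) + 0 = m + m + k by ring] at h
  exact of_uvar_pow_smul h

end UPowDvd

end

theorem exists_unique_right_twist_general
    {A : Type*} [CommRing A] {d : ℕ}
    (φ : LaurentSeries A →+* LaurentSeries A)
    (lam : ℝ) (N : ℕ)
    (hφ : ∀ k : ℕ, N < k → ∀ f : PowerSeries A,
      ∃ g : PowerSeries A,
        φ (uvar A ^ k * HahnSeries.ofPowerSeries ℤ A f) =
          uvar A ^ ⌊lam * (k : ℝ)⌋₊ * HahnSeries.ofPowerSeries ℤ A g)
    (m n : ℕ) (hnN : N < n) (hn : (2 * (m : ℝ) + 1) < (lam - 1) * (n : ℝ))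
    (g : Matrix (Fin d) (Fin d) (LaurentSeries A)) (hg : MemUn n g)
    (x : Matrix (Fin d) (Fin d) (LaurentSeries A)) (hx : MemVm m x) :
    ∃! h : Matrix (Fin d) (Fin d) (LaurentSeries A),
      MemUn n h ∧ g⁻¹ * x * g.map ⇑φ = h⁻¹ * x := by
  have hn0 : n ≠ 0 := by omega
  have hxdet : IsUnit x.det := (Matrix.isUnit_iff_isUnit_det x).mp hx.1
  rw [memUn_iff_uPowDvd] at hg
  have hφg : UPowDvd (n + 2 * m) (g.map φ - 1) := by
    have hfloor : n + 2 * m ≤ ⌊lam * n⌋₊ := Nat.le_floor (by push_cast; linarith)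
    rw [← Matrix.map_one φ (map_zero φ) (map_one φ), ← Matrix.map_sub _ (map_sub φ)]
    exact (hg.map_of_forall (hφ n hnN)).mono hfloor
  set w := g⁻¹ * x * g.map φ * x⁻¹ with hw
  have hw1 : UPowDvd n (w - 1) := by
    have hsplit : w - 1 = (g⁻¹ - 1) + g⁻¹ * (x * (g.map φ - 1) * x⁻¹) := by
      simp only [hw, mul_sub, sub_mul, mul_one, Matrix.mul_assoc, x.mul_nonsing_inv hxdet]
      abel
    have hginv := hg.inv_sub_one hn0
    have hprod := hginv.zero_of_sub_one.mul (UPowDvd.conj_of_memVm hx hφg)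
    rw [zero_add] at hprod
    rw [hsplit]
    exact hginv.add hprod
  have hwx : g⁻¹ * x * g.map φ = w * x := by
    rw [hw, x.nonsing_inv_mul_cancel_right _ hxdet]
  refine ⟨w⁻¹, ⟨memUn_iff_uPowDvd.mpr (hw1.inv_sub_one hn0), ?_⟩, ?_⟩
  · rwa [Matrix.nonsing_inv_nonsing_inv _ (hw1.isUnit_det_of_sub_one hn0)]
  · rintro h ⟨hh, hhx⟩
    have hinv : h⁻¹ = w := hx.1.mul_left_inj.mp (hhx.symm.trans hwx)
    rw [← hinv, Matrix.nonsing_inv_nonsing_inv _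
      ((memUn_iff_uPowDvd.mp hh).isUnit_det_of_sub_one hn0)]

/-- part (1) of Lemma 2.4.2 of the paper.
Let `φ : A((u)) → A((u))` be locally contracting of factor `λ > 1` beyond `N`
(i.e. `φ(u^k·A[[u]]) ⊆ u^{⌊λk⌋}·A[[u]]` for `k > N`).  If `n > N` and `(λ−1)·n > 2m+1`,
then for every `g ∈ U_n` and `x ∈ V_m` there is a unique `h ∈ U_n` with
`g⁻¹·x·φ(g) = h⁻¹·x`. -/
theorem exists_unique_right_twist
    {A : Type*} [CommRing A] {d : ℕ} (hd : 1 ≤ d)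
    (φ : LaurentSeries A →+* LaurentSeries A)
    (lam : ℝ) (hlam : 1 < lam) (N : ℕ)
    (hφ : ∀ k : ℕ, N < k → ∀ f : PowerSeries A,
      ∃ g : PowerSeries A,
        φ (uvar A ^ k * HahnSeries.ofPowerSeries ℤ A f) =
          uvar A ^ ⌊lam * (k : ℝ)⌋₊ * HahnSeries.ofPowerSeries ℤ A g)
    (m n : ℕ) (hnN : N < n) (hn : (2 * (m : ℝ) + 1) < (lam - 1) * (n : ℝ))
    (g : Matrix (Fin d) (Fin d) (LaurentSeries A)) (hg : MemUn n g)
    (x : Matrix (Fin d) (Fin d) (LaurentSeries A)) (hx : MemVm m x) :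
    ∃! h : Matrix (Fin d) (Fin d) (LaurentSeries A),
      MemUn n h ∧ g⁻¹ * x * g.map ⇑φ = h⁻¹ * x :=
  exists_unique_right_twist_general φ lam N hφ m n hnN hn g hg x hx
end
end

section
/- Let A be a commutative ring, d ≥ 1, and let φ : A((u)) → A((u)) be a ring endomorphism for which there exist a real number λ > 1 and an integer N ≥ 0 with φ(u^k·A[[u]]) ⊆ u^{⌊λk⌋}·A[[u]] for all integers k > N. Let m ≥ 0 and let n be an integer with n > N and (λ−1)·n > 2m+1. Then for every h ∈ U_n and every x ∈ V_m there exists a unique g ∈ U_n such that g^{-1}·x·φ(g) = h^{-1}·x, where φ is applied to matrices entrywise. -/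
noncomputable section

/-!
For invertible `g` the equation `g⁻¹ x φ(g) = h⁻¹ x` says that `g` is a fixed point of
`T g = x φ(g) x⁻¹ h`. Filter matrices over `A((u))` by the `u`-adic order of their entries. If
`g₁ - g₂` has order `k ≥ n`, then `φ` raises the order to `⌊λk⌋ ≥ k + 2m + 1`, while `x` and `x⁻¹`
lower it by at most `2m`, so `T g₁ - T g₂` has order `≥ k + 1`. As `A((u))` is complete and
separated for this filtration, the iterates `Tʲ 1` converge coefficientwise to a fixed point, and
two fixed points in `1 + uⁿ M_d(A[[u]])` agree to every order. The same contraction principle,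
applied to `y ↦ 1 - (g - 1) y`, shows that the elements of `U_n` are invertible.
-/

theorem Matrix.inv_mul_mul_eq_inv_mul_iff {R ι : Type*} [CommRing R] [Fintype ι] [DecidableEq ι]
    {g x h y : Matrix ι ι R} (hg : IsUnit g) (hx : IsUnit x) (hh : IsUnit h) :
    g⁻¹ * x * y = h⁻¹ * x ↔ x * y * x⁻¹ * h = g := by
  have := hg.invertible
  have := hx.invertible
  have := hh.invertible
  rw [mul_assoc, inv_mul_eq_iff_eq_mul_of_invertible, ← mul_assoc g,
    ← mul_inv_eq_iff_eq_mul_of_invertible x, eq_comm, mul_inv_eq_iff_eq_mul_of_invertible, eq_comm]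

theorem add_two_mul_add_one_le_floor_mul {lam : ℝ} (hlam : 1 ≤ lam) {m n k : ℕ}
    (hn : 2 * (m : ℝ) + 1 < (lam - 1) * n) (hk : n ≤ k) : k + 2 * m + 1 ≤ ⌊lam * k⌋₊ := by
  have : (lam - 1) * n ≤ (lam - 1) * k :=
    mul_le_mul_of_nonneg_left (by exact_mod_cast hk) (sub_nonneg.mpr hlam)
  refine Nat.le_floor ?_
  push_cast
  linarith

namespace LaurentSeries

open HahnSeries

variable {A : Type*} [CommRing A]

variable (A) in
def filtration (s : ℤ) : AddSubgroup (LaurentSeries A) where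
  carrier := {f | (s : WithTop ℤ) ≤ f.orderTop}
  zero_mem' := by simp
  add_mem' {f g} hf hg :=
    show (s : WithTop ℤ) ≤ (f + g).orderTop from (le_min hf hg).trans min_orderTop_le_orderTop_add
  neg_mem' {f} hf := show (s : WithTop ℤ) ≤ (-f).orderTop by rwa [orderTop_neg]

theorem mem_filtration {s : ℤ} {f : LaurentSeries A} :
    f ∈ filtration A s ↔ (s : WithTop ℤ) ≤ f.orderTop :=
  Iff.rfl

theorem mem_filtration_iff_coeff {s : ℤ} {f : LaurentSeries A} :
    f ∈ filtration A s ↔ ∀ t < s, f.coeff t = 0 := by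
  simp [mem_filtration, le_orderTop_iff_forall]

theorem filtration_antitone : Antitone (filtration A) := fun _ _ hst _ hf =>
  mem_filtration.mpr ((WithTop.coe_le_coe.mpr hst).trans hf)

theorem mul_mem_filtration {s t : ℤ} {f g : LaurentSeries A} (hf : f ∈ filtration A s)
    (hg : g ∈ filtration A t) : f * g ∈ filtration A (s + t) :=
  mem_filtration.mpr ((add_le_add hf hg).trans orderTop_add_le_mul)

theorem ofPowerSeries_mem_filtration_zero (c : PowerSeries A) :
    ofPowerSeries ℤ A c ∈ filtration A 0 := by
  refine mem_filtration_iff_coeff.mpr fun t ht => ?_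
  rw [ofPowerSeries_apply]
  refine embDomain_of_notMem_range ?_
  rintro ⟨k, rfl⟩
  simp only [Nat.castOrderEmbedding_apply] at ht
  omega

theorem one_mem_filtration_zero : (1 : LaurentSeries A) ∈ filtration A 0 := by
  simpa using ofPowerSeries_mem_filtration_zero (1 : PowerSeries A)

theorem mem_filtration_iff_exists_powerSeries {s : ℤ} {f : LaurentSeries A} :
    f ∈ filtration A s ↔ ∃ c : PowerSeries A, f = single s 1 * ofPowerSeries ℤ A c := by
  constructor
  · intro hf
    refine ⟨PowerSeries.mk fun k => f.coeff (s + k), ?_⟩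
    ext t
    rw [coeff_single_mul, one_mul]
    rcases lt_or_ge t s with hts | hst
    · rw [mem_filtration_iff_coeff.mp hf t hts,
        mem_filtration_iff_coeff.mp (ofPowerSeries_mem_filtration_zero _) _ (by omega)]
    · obtain ⟨k, hk⟩ := Int.eq_ofNat_of_zero_le (sub_nonneg.mpr hst)
      rw [hk, ofPowerSeries_apply_coeff, PowerSeries.coeff_mk, ← hk, add_sub_cancel]
  · rintro ⟨c, rfl⟩
    simpa using mul_mem_filtration (mem_filtration.mpr orderTop_single_le)
      (ofPowerSeries_mem_filtration_zero c)

theorem eq_zero_of_forall_mem_filtration {f : LaurentSeries A} {s : ℤ}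
    (hf : ∀ k : ℕ, f ∈ filtration A (s + k)) : f = 0 := by
  ext t
  exact mem_filtration_iff_coeff.mp (hf (t - s + 1).toNat) t (by omega)

theorem sub_mem_filtration_of_le {f : ℕ → LaurentSeries A} {s : ℤ}
    (hf : ∀ j : ℕ, f (j + 1) - f j ∈ filtration A (s + j)) {j j' : ℕ} (hjj' : j ≤ j') :
    f j' - f j ∈ filtration A (s + j) := by
  induction j', hjj' using Nat.le_induction with
  | base => simp
  | succ j' hjj' ih =>
    rw [← sub_add_sub_cancel]
    exact add_mem (filtration_antitone (by omega) (hf j')) ih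

theorem exists_limit_of_succ_sub_mem_filtration {f : ℕ → LaurentSeries A} {s : ℤ}
    (hf : ∀ j : ℕ, f (j + 1) - f j ∈ filtration A (s + j)) :
    ∃ L, ∀ j : ℕ, L - f j ∈ filtration A (s + j) := by
  have coeff_eq : ∀ (j j' : ℕ) (t : ℤ), t < s + j → t < s + j' →
      (f j').coeff t = (f j).coeff t := by
    intro j j' t ht ht'
    rcases le_total j j' with h | h
    · exact sub_eq_zero.mp (mem_filtration_iff_coeff.mp (sub_mem_filtration_of_le hf h) t ht)
    · exact (sub_eq_zero.mp
        (mem_filtration_iff_coeff.mp (sub_mem_filtration_of_le hf h) t ht')).symm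
  -- The limit is `f 0 + tail`, so that the support of `tail` is bounded below by `s`.
  let J : ℤ → ℕ := fun t => (t - s + 1).toNat
  have hJ : ∀ t, t < s + J t := fun t => by simp only [J]; omega
  let tail : LaurentSeries A := ofSuppBddBelow (fun t => (f (J t) - f 0).coeff t) ⟨s, by
    intro t ht
    by_contra! hts
    exact ht (by simp only [coeff_sub]; rw [coeff_eq 0 (J t) t (by simpa) (hJ t), sub_self])⟩
  refine ⟨f 0 + tail, fun j => mem_filtration_iff_coeff.mpr fun t ht => ?_⟩
  simp only [tail, coeff_sub, coeff_add, coeff_ofSuppBddBelow, coeff_eq j (J t) t ht (hJ t)]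
  ring

section Matrix

variable {ι : Type*}

variable (A ι) in
def matrixFiltration (s : ℤ) : AddSubgroup (Matrix ι ι (LaurentSeries A)) where
  carrier := {M | ∀ i j, M i j ∈ filtration A s}
  zero_mem' _ _ := zero_mem _
  add_mem' hM hM' i j := add_mem (hM i j) (hM' i j)
  neg_mem' hM i j := neg_mem (hM i j)

theorem mem_matrixFiltration {s : ℤ} {M : Matrix ι ι (LaurentSeries A)} :
    M ∈ matrixFiltration A ι s ↔ ∀ i j, M i j ∈ filtration A s :=
  Iff.rfl

theorem matrixFiltration_antitone : Antitone (matrixFiltration A ι) := fun _ _ hst _ hM i j =>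
  filtration_antitone hst (hM i j)

theorem mul_mem_matrixFiltration [Fintype ι] {s t : ℤ} {M M' : Matrix ι ι (LaurentSeries A)}
    (hM : M ∈ matrixFiltration A ι s) (hM' : M' ∈ matrixFiltration A ι t) :
    M * M' ∈ matrixFiltration A ι (s + t) := fun i j =>
  sum_mem fun k _ => mul_mem_filtration (hM i k) (hM' k j)

theorem one_mem_matrixFiltration_zero [DecidableEq ι] :
    (1 : Matrix ι ι (LaurentSeries A)) ∈ matrixFiltration A ι 0 := fun i j => by
  rw [Matrix.one_apply]
  split_ifs
  exacts [one_mem_filtration_zero, zero_mem _]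

theorem eq_zero_of_forall_mem_matrixFiltration {M : Matrix ι ι (LaurentSeries A)} {s : ℤ}
    (hM : ∀ k : ℕ, M ∈ matrixFiltration A ι (s + k)) : M = 0 :=
  Matrix.ext fun i j => eq_zero_of_forall_mem_filtration fun k => hM k i j

theorem exists_limit_of_succ_sub_mem_matrixFiltration {f : ℕ → Matrix ι ι (LaurentSeries A)}
    {s : ℤ} (hf : ∀ j : ℕ, f (j + 1) - f j ∈ matrixFiltration A ι (s + j)) :
    ∃ L, ∀ j : ℕ, L - f j ∈ matrixFiltration A ι (s + j) := by
  choose L hL using fun i j => exists_limit_of_succ_sub_mem_filtration (f := fun k => f k i j)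
    fun k => hf k i j
  exact ⟨L, fun k i j => hL i j k⟩

end Matrix

section Contraction

variable {ι : Type*}

def IsContraction (n : ℤ) (F : Matrix ι ι (LaurentSeries A) → Matrix ι ι (LaurentSeries A)) :
    Prop :=
  ∀ k ≥ n, ∀ g₁ g₂, g₁ - g₂ ∈ matrixFiltration A ι k →
    F g₁ - F g₂ ∈ matrixFiltration A ι (k + 1)

variable {F : Matrix ι ι (LaurentSeries A) → Matrix ι ι (LaurentSeries A)} {n : ℤ}

theorem IsContraction.eq_of_isFixedPt (hF : IsContraction n F)
    {g₁ g₂ : Matrix ι ι (LaurentSeries A)} (h₁ : Function.IsFixedPt F g₁)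
    (h₂ : Function.IsFixedPt F g₂) (h : g₁ - g₂ ∈ matrixFiltration A ι n) : g₁ = g₂ := by
  have close : ∀ k : ℕ, g₁ - g₂ ∈ matrixFiltration A ι (n + k) := by
    intro k
    induction k with
    | zero => simpa using h
    | succ k ih =>
      rw [Nat.cast_succ, ← add_assoc, ← h₁.eq, ← h₂.eq]
      exact hF _ (by omega) _ _ ih
  exact sub_eq_zero.mp (eq_zero_of_forall_mem_matrixFiltration close)

theorem IsContraction.exists_isFixedPt (hF : IsContraction n F)
    {c : Matrix ι ι (LaurentSeries A)} (hc : F c - c ∈ matrixFiltration A ι n) :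
    ∃ g, g - c ∈ matrixFiltration A ι n ∧ Function.IsFixedPt F g := by
  have step : ∀ j : ℕ, F^[j + 1] c - F^[j] c ∈ matrixFiltration A ι (n + j) := by
    intro j
    induction j with
    | zero => simpa using hc
    | succ j ih =>
      rw [Nat.cast_succ, ← add_assoc]
      have := hF _ (by omega) _ _ ih
      rwa [← Function.iterate_succ_apply' F, ← Function.iterate_succ_apply' F] at this
  obtain ⟨L, hL⟩ := exists_limit_of_succ_sub_mem_matrixFiltration (f := (F^[·] c)) step
  refine ⟨L, by simpa using hL 0, sub_eq_zero.mp
    (eq_zero_of_forall_mem_matrixFiltration (s := n + 1) fun j => ?_)⟩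
  have hFL : F L - F^[j + 1] c ∈ matrixFiltration A ι (n + j + 1) := by
    rw [Function.iterate_succ_apply']
    exact hF _ (by omega) _ _ (hL j)
  rw [add_right_comm, ← sub_sub_sub_cancel_right (F L) L (F^[j + 1] c)]
  refine sub_mem hFL ?_
  simpa only [Nat.cast_succ, ← add_assoc] using hL (j + 1)

theorem IsContraction.existsUnique_isFixedPt (hF : IsContraction n F)
    {c : Matrix ι ι (LaurentSeries A)} (hc : F c - c ∈ matrixFiltration A ι n) :
    ∃! g, g - c ∈ matrixFiltration A ι n ∧ Function.IsFixedPt F g := by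
  obtain ⟨g, hgc, hg⟩ := hF.exists_isFixedPt hc
  refine ⟨g, ⟨hgc, hg⟩, fun g' ⟨hg'c, hg'⟩ => hF.eq_of_isFixedPt hg' hg ?_⟩
  rw [← sub_sub_sub_cancel_right g' g c]
  exact sub_mem hg'c hgc

theorem isUnit_of_sub_one_mem_matrixFiltration [Fintype ι] [DecidableEq ι]
    {g : Matrix ι ι (LaurentSeries A)} (hg : g - 1 ∈ matrixFiltration A ι 1) : IsUnit g := by
  have hF : IsContraction 0 fun y => 1 - (g - 1) * y := by
    intro k _ y₁ y₂ hy
    rw [sub_sub_sub_cancel_left, ← mul_sub, ← neg_sub y₁, add_comm, mul_neg]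
    exact neg_mem (mul_mem_matrixFiltration hg hy)
  have hc : (1 - (g - 1) * 1) - 1 ∈ matrixFiltration A ι 0 := by
    rw [mul_one, sub_sub_cancel_left]
    exact neg_mem (matrixFiltration_antitone zero_le_one hg)
  obtain ⟨y, -, hy⟩ := hF.exists_isFixedPt hc
  have hgy : g * y = 1 := by
    rw [Function.IsFixedPt, sub_mul, one_mul, sub_eq_iff_eq_add, add_sub_cancel] at hy
    exact hy.symm
  exact (Matrix.isUnit_iff_isUnit_det g).mpr (Matrix.isUnit_det_of_right_inverse hgy)

end Contraction

def IsLocallyContracting (φ : LaurentSeries A →+* LaurentSeries A) (lam : ℝ) (N : ℕ) : Prop :=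
  ∀ k : ℕ, N < k → ∀ f : PowerSeries A, ∃ g : PowerSeries A,
    φ (uvar A ^ k * ofPowerSeries ℤ A f) = uvar A ^ ⌊lam * (k : ℝ)⌋₊ * ofPowerSeries ℤ A g

theorem uvar_pow (n : ℕ) : uvar A ^ n = single (n : ℤ) 1 := by
  rw [uvar, single_pow, one_pow, nsmul_eq_mul, mul_one]

namespace IsLocallyContracting

variable {φ : LaurentSeries A →+* LaurentSeries A} {lam : ℝ} {N : ℕ}

theorem map_mem_filtration (hφ : IsLocallyContracting φ lam N) {k : ℕ} (hk : N < k)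
    {f : LaurentSeries A} (hf : f ∈ filtration A k) : φ f ∈ filtration A ⌊lam * k⌋₊ := by
  obtain ⟨c, rfl⟩ := mem_filtration_iff_exists_powerSeries.mp hf
  obtain ⟨c', hc'⟩ := hφ k hk c
  rw [← uvar_pow, hc', uvar_pow]
  exact mem_filtration_iff_exists_powerSeries.mpr ⟨c', rfl⟩

theorem isContraction_twist {ι : Type*} [Fintype ι] (hφ : IsLocallyContracting φ lam N)
    (hlam : 1 ≤ lam) {m n : ℕ} (hnN : N < n) (hn : 2 * (m : ℝ) + 1 < (lam - 1) * n)
    {x y h : Matrix ι ι (LaurentSeries A)} (hx : x ∈ matrixFiltration A ι (-m))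
    (hy : y ∈ matrixFiltration A ι (-m)) (hh : h ∈ matrixFiltration A ι 0) :
    IsContraction n fun g => x * g.map φ * y * h := by
  intro k hk g₁ g₂ hg
  lift k to ℕ using by omega
  have hfloor := add_two_mul_add_one_le_floor_mul hlam hn (by exact_mod_cast hk)
  have hmap : (g₁ - g₂).map φ ∈ matrixFiltration A ι ⌊lam * k⌋₊ := fun i j =>
    hφ.map_mem_filtration (by omega) (hg i j)
  rw [← sub_mul, ← sub_mul, ← mul_sub, ← Matrix.map_sub _ (map_sub φ)]
  refine matrixFiltration_antitone ?_
    (mul_mem_matrixFiltration (mul_mem_matrixFiltration (mul_mem_matrixFiltration hx hmap) hy) hh)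
  omega

end IsLocallyContracting

theorem mem_filtration_neg_of_uvar_pow_mul_eq {m : ℕ} {f : LaurentSeries A} {c : PowerSeries A}
    (hc : uvar A ^ m * f = ofPowerSeries ℤ A c) : f ∈ filtration A (-m) := by
  refine mem_filtration_iff_exists_powerSeries.mpr ⟨c, ?_⟩
  rw [← hc, uvar_pow, ← mul_assoc, single_mul_single, neg_add_cancel, mul_one, single_zero_one,
    one_mul]

variable {d : ℕ}

theorem memUn_iff_sub_one_mem {n : ℕ} {g : Matrix (Fin d) (Fin d) (LaurentSeries A)} :
    MemUn n g ↔ g - 1 ∈ matrixFiltration A (Fin d) n := by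
  simp only [MemUn, mem_matrixFiltration, mem_filtration_iff_exists_powerSeries, uvar_pow]

theorem MemUn.isUnit {n : ℕ} (hn : 1 ≤ n) {g : Matrix (Fin d) (Fin d) (LaurentSeries A)}
    (hg : MemUn n g) : IsUnit g :=
  isUnit_of_sub_one_mem_matrixFiltration
    (matrixFiltration_antitone (by exact_mod_cast hn) (memUn_iff_sub_one_mem.mp hg))

theorem MemVm.mem_matrixFiltration {m : ℕ} {x : Matrix (Fin d) (Fin d) (LaurentSeries A)}
    (hx : MemVm m x) :
    x ∈ matrixFiltration A (Fin d) (-m) ∧ x⁻¹ ∈ matrixFiltration A (Fin d) (-m) :=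
  ⟨fun i j => mem_filtration_neg_of_uvar_pow_mul_eq (hx.2.1 i j).choose_spec,
    fun i j => mem_filtration_neg_of_uvar_pow_mul_eq (hx.2.2 i j).choose_spec⟩

end LaurentSeries

open LaurentSeries in
theorem exists_unique_left_twist_general
    {A : Type*} [CommRing A] {d : ℕ}
    (φ : LaurentSeries A →+* LaurentSeries A)
    (lam : ℝ) (hlam : 1 < lam) (N : ℕ)
    (hφ : ∀ k : ℕ, N < k → ∀ f : PowerSeries A,
      ∃ g : PowerSeries A,
        φ (uvar A ^ k * HahnSeries.ofPowerSeries ℤ A f) =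
          uvar A ^ ⌊lam * (k : ℝ)⌋₊ * HahnSeries.ofPowerSeries ℤ A g)
    (m n : ℕ) (hnN : N < n) (hn : (2 * (m : ℝ) + 1) < (lam - 1) * (n : ℝ))
    (h : Matrix (Fin d) (Fin d) (LaurentSeries A)) (hh : MemUn n h)
    (x : Matrix (Fin d) (Fin d) (LaurentSeries A)) (hx : MemVm m x) :
    ∃! g : Matrix (Fin d) (Fin d) (LaurentSeries A),
      MemUn n g ∧ g⁻¹ * x * g.map ⇑φ = h⁻¹ * x := by
  have hn1 : 1 ≤ n := by omega
  have hh1 := memUn_iff_sub_one_mem.mp hh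
  have hh0 : h ∈ matrixFiltration A (Fin d) 0 := by
    simpa using add_mem (matrixFiltration_antitone (Nat.cast_nonneg n) hh1)
      one_mem_matrixFiltration_zero
  have hT := IsLocallyContracting.isContraction_twist hφ hlam.le hnN hn
    hx.mem_matrixFiltration.1 hx.mem_matrixFiltration.2 hh0
  have hT1 : x * (1 : Matrix (Fin d) (Fin d) (LaurentSeries A)).map φ * x⁻¹ * h - 1 ∈
      matrixFiltration A (Fin d) n := by
    rwa [Matrix.map_one _ (map_zero φ) (map_one φ), mul_one,
      Matrix.mul_nonsing_inv _ ((Matrix.isUnit_iff_isUnit_det x).mp hx.1), one_mul]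
  refine (existsUnique_congr fun g => ?_).mpr (hT.existsUnique_isFixedPt hT1)
  rw [memUn_iff_sub_one_mem]
  exact and_congr_right fun hg => Matrix.inv_mul_mul_eq_inv_mul_iff
    (MemUn.isUnit hn1 (memUn_iff_sub_one_mem.mpr hg)) hx.1 (hh.isUnit hn1)

/-- part (2) of Lemma 2.4.2 of the paper.
Let `φ : A((u)) → A((u))` be locally contracting of factor `λ > 1` beyond `N`
(i.e. `φ(u^k·A[[u]]) ⊆ u^{⌊λk⌋}·A[[u]]` for `k > N`).  If `n > N` and `(λ−1)·n > 2m+1`,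
then for every `h ∈ U_n` and `x ∈ V_m` there is a unique `g ∈ U_n` with
`g⁻¹·x·φ(g) = h⁻¹·x`. -/
theorem exists_unique_left_twist
    {A : Type*} [CommRing A] {d : ℕ} (hd : 1 ≤ d)
    (φ : LaurentSeries A →+* LaurentSeries A)
    (lam : ℝ) (hlam : 1 < lam) (N : ℕ)
    (hφ : ∀ k : ℕ, N < k → ∀ f : PowerSeries A,
      ∃ g : PowerSeries A,
        φ (uvar A ^ k * HahnSeries.ofPowerSeries ℤ A f) =
          uvar A ^ ⌊lam * (k : ℝ)⌋₊ * HahnSeries.ofPowerSeries ℤ A g)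
    (m n : ℕ) (hnN : N < n) (hn : (2 * (m : ℝ) + 1) < (lam - 1) * (n : ℝ))
    (h : Matrix (Fin d) (Fin d) (LaurentSeries A)) (hh : MemUn n h)
    (x : Matrix (Fin d) (Fin d) (LaurentSeries A)) (hx : MemVm m x) :
    ∃! g : Matrix (Fin d) (Fin d) (LaurentSeries A),
      MemUn n g ∧ g⁻¹ * x * g.map ⇑φ = h⁻¹ * x :=
  exists_unique_left_twist_general φ lam hlam N hφ m n hnN hn h hh x hx

end
end

section
/- Let A be a commutative ring, d ≥ 1, and let φ : A((u)) → A((u)) be a ring endomorphism for which there exist a real number λ > 1 and an integer N ≥ 0 with φ(u^k·A[[u]]) ⊆ u^{⌊λk⌋}·A[[u]] for all integers k > N. Then for every integer n > N and every d×d matrix g over A((u)) with g − 1 ∈ u^n·M_d(A[[u]]), one has φ(g) − 1 ∈ u^{⌊λn⌋}·M_d(A[[u]]) (φ applied entrywise); in particular all entries of φ(g) lie in A[[u]] and φ(g) is invertible as a matrix over A[[u]]. -/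
/-!
Write `g = 1 + uⁿ C` with `C` a matrix over `A[[u]]`. Since `φ` is a ring map,
`φ(g) - 1 = φ(uⁿ C)`, and the contraction hypothesis at `k = n` makes every entry of this
`u^m` times a power series, `m = ⌊λn⌋ ≥ 1`. Hence `φ(g)` is the image of a matrix over
`A[[u]]` that reduces to the identity modulo `u`; its determinant has constant term `1`, so it
is a unit of `A[[u]]` and the matrix is invertible over `A[[u]]`.
-/

noncomputable section

open PowerSeries

theorem uvar_pow_mul_ofPowerSeries {A : Type*} [CommRing A] (m : ℕ) (c : PowerSeries A) :
    uvar A ^ m * HahnSeries.ofPowerSeries ℤ A c = HahnSeries.ofPowerSeries ℤ A (X ^ m * c) := by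
  rw [map_mul, map_pow, HahnSeries.ofPowerSeries_X, uvar]

namespace Matrix

variable {n R S : Type*} [Fintype n] [DecidableEq n]

theorem map_sub_one_apply [Ring R] [Ring S] (f : R →+* S) (M : Matrix n n R) (i j : n) :
    (M.map f - 1) i j = f ((M - 1) i j) := by
  rw [← RingHom.mapMatrix_apply, ← map_one f.mapMatrix, ← map_sub]
  rfl

theorem eq_map_one_add_of_sub_one_apply [Ring R] [Ring S] {f : R →+* S} {M : Matrix n n S}
    {C : Matrix n n R} (h : ∀ i j, (M - 1) i j = f (C i j)) : M = (1 + C).map f := by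
  have hC : M - 1 = f.mapMatrix C := ext h
  rw [← RingHom.mapMatrix_apply, map_add, map_one, ← hC, add_sub_cancel]

theorem isUnit_det_one_add_X_pow_smul [CommRing R] {m : ℕ} (hm : m ≠ 0)
    (C : Matrix n n (PowerSeries R)) : IsUnit (1 + (X ^ m : PowerSeries R) • C).det := by
  have hconst : (constantCoeff (R := R)).mapMatrix (1 + (X ^ m : PowerSeries R) • C) = 1 := by
    ext i j
    by_cases hij : i = j <;> simp [one_apply, hij, zero_pow hm]
  rw [isUnit_iff_constantCoeff, RingHom.map_det, hconst, det_one]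
  exact isUnit_one

theorem map_mul_map_nonsing_inv [CommRing R] [Ring S] (f : R →+* S) {D : Matrix n n R}
    (hD : IsUnit D.det) : D.map f * D⁻¹.map f = 1 := by
  rw [← RingHom.mapMatrix_apply, ← RingHom.mapMatrix_apply, ← map_mul, mul_nonsing_inv D hD,
    map_one]

theorem map_nonsing_inv_mul_map [CommRing R] [Ring S] (f : R →+* S) {D : Matrix n n R}
    (hD : IsUnit D.det) : D⁻¹.map f * D.map f = 1 := by
  rw [← RingHom.mapMatrix_apply, ← RingHom.mapMatrix_apply, ← map_mul, nonsing_inv_mul D hD,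
    map_one]

end Matrix

/-- first Lemma of Section 3.3 of the paper.
Let `φ : A((u)) → A((u))` satisfy `φ(u^k·A[[u]]) ⊆ u^{⌊λk⌋}·A[[u]]` for all `k > N`, where
`λ > 1`.  Then for every `n > N` and every `d×d` matrix `g` with `g − 1 ∈ uⁿ·M_d(A[[u]])`,
one has `φ(g) − 1 ∈ u^{⌊λn⌋}·M_d(A[[u]])`; in particular all entries of `φ(g)` lie in
`A[[u]]` and `φ(g)` is invertible as a matrix over `A[[u]]`. -/
theorem map_congruence_subgroup_mem_plus
    {A : Type*} [CommRing A] {d : ℕ}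
    (φ : LaurentSeries A →+* LaurentSeries A)
    (lam : ℝ) (hlam : 1 < lam) (N : ℕ)
    (hφ : ∀ k : ℕ, N < k → ∀ f : PowerSeries A,
      ∃ g : PowerSeries A,
        φ (uvar A ^ k * HahnSeries.ofPowerSeries ℤ A f) =
          uvar A ^ ⌊lam * (k : ℝ)⌋₊ * HahnSeries.ofPowerSeries ℤ A g)
    (n : ℕ) (hn : N < n)
    (g : Matrix (Fin d) (Fin d) (LaurentSeries A))
    (hg : ∀ i j, ∃ c : PowerSeries A,
      (g - 1) i j = uvar A ^ n * HahnSeries.ofPowerSeries ℤ A c) :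
    (∀ i j, ∃ c : PowerSeries A,
      (g.map ⇑φ - 1) i j = uvar A ^ ⌊lam * (n : ℝ)⌋₊ * HahnSeries.ofPowerSeries ℤ A c) ∧
    (∀ i j, ∃ c : PowerSeries A, (g.map ⇑φ) i j = HahnSeries.ofPowerSeries ℤ A c) ∧
    (∃ h : Matrix (Fin d) (Fin d) (PowerSeries A),
      g.map ⇑φ * h.map (fun c => HahnSeries.ofPowerSeries ℤ A c) = 1 ∧
      h.map (fun c => HahnSeries.ofPowerSeries ℤ A c) * g.map ⇑φ = 1) := by
  set m := ⌊lam * (n : ℝ)⌋₊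
  have hm : m ≠ 0 := by
    have hn1 : (1 : ℝ) ≤ n := by exact_mod_cast Nat.one_le_of_lt hn
    exact (Nat.floor_pos.2 (by nlinarith)).ne'
  choose c hc using hg
  choose ψ hψ using hφ n hn
  have hentry : ∀ i j,
      (g.map φ - 1) i j = uvar A ^ m * HahnSeries.ofPowerSeries ℤ A (ψ (c i j)) := fun i j ↦ by
    rw [Matrix.map_sub_one_apply, hc, hψ]
  set D : Matrix (Fin d) (Fin d) (PowerSeries A) :=
    1 + (X ^ m : PowerSeries A) • Matrix.of fun i j ↦ ψ (c i j)
  have hgD : g.map φ = D.map (HahnSeries.ofPowerSeries ℤ A) :=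
    Matrix.eq_map_one_add_of_sub_one_apply fun i j ↦ by
      rw [hentry, uvar_pow_mul_ofPowerSeries]
      rfl
  have hD : IsUnit D.det := Matrix.isUnit_det_one_add_X_pow_smul hm _
  refine ⟨fun i j ↦ ⟨_, hentry i j⟩, fun i j ↦ ⟨D i j, by rw [hgD]; rfl⟩, D⁻¹, ?_, ?_⟩
  · rw [hgD]
    exact Matrix.map_mul_map_nonsing_inv _ hD
  · rw [hgD]
    exact Matrix.map_nonsing_inv_mul_map _ hD

end
end
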